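/- arXiv:2603.11926 — 2 statements merged into one kernel-verified Lean document; each statement's English description precedes it below -/
import Mathlib

section
/- Let $n\geq 2$, $T_0\in\mathbb{R}$, $\alpha>0$, and let $\bar g:[T_0,\infty)\times\mathbb{S}^{n-1}\to\mathbb{R}$ be a smooth nonnegative function satisfying $\partial_t^2\bar g+\Delta_{\mathbb{S}^{n-1}}\bar g-\alpha^2\bar g\geq 0$. Suppose there exist constants $c_1,c_2\geq 0$, $\lambda_1\geq 0$, and $0\leq\lambda_2<\alpha$ such that $\bar g(t,\theta)\leq c_1 e^{-\lambda_1 t}+c_2 e^{\lambda_2 t}$ for all $(t,\theta)$. Then $\bar g(t,\theta)\leq (c_1 e^{-\lambda_1 T_0}+c_2 e^{\lambda_2 T_0})e^{-\alpha(t-T_0)}$ for all $(t,\theta)\in[T_0,\infty)\times\mathbb{S}^{n-1}$. -/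
open MeasureTheory Real Set Filter

noncomputable section
open scoped Classical Topology

abbrev Euc (n : ℕ) := EuclideanSpace ℝ (Fin n)

/-- Euclidean Laplacian of a scalar function. -/
def lap {n : ℕ} (f : Euc n → ℝ) (x : Euc n) : ℝ :=
  ∑ i : Fin n, iteratedFDeriv ℝ 2 f x ![EuclideanSpace.single i 1, EuclideanSpace.single i 1]

abbrev Sph (n : ℕ) := Metric.sphere (0 : Euc n) 1

/-- 0-homogeneous extension of a function on the unit sphere. -/
def sphExt {n : ℕ} (g : Sph n → ℝ) (x : Euc n) : ℝ :=
  if hx : x = 0 then 0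
  else g ⟨‖x‖⁻¹ • x, by
    rw [mem_sphere_zero_iff_norm, norm_smul, norm_inv, norm_norm]
    exact inv_mul_cancel₀ (norm_ne_zero_iff.mpr hx)⟩

/-- Laplace–Beltrami operator on the unit sphere, defined through the
0-homogeneous extension and the Euclidean Laplacian (for a 0-homogeneous
extension `G` of `g` one has `Δ_{ℝⁿ} G = r⁻² Δ_{Sⁿ⁻¹} g`, so on the sphere they agree). -/
def sphLap {n : ℕ} (g : Sph n → ℝ) (θ : Sph n) : ℝ :=
  lap (sphExt g) (θ : Euc n)

/-- Smoothness of a function on the half-cylinder `[T₀,∞) × Sⁿ⁻¹`, expressed through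
the 0-homogeneous extension in the sphere variable. -/
def cylSmoothOn {n : ℕ} (u : ℝ → Sph n → ℝ) (T0 : ℝ) : Prop :=
  ContDiffOn ℝ (⊤ : ℕ∞) (fun p : ℝ × Euc n => sphExt (u p.1) p.2) (Set.Ici T0 ×ˢ {x : Euc n | x ≠ 0})

/-! ### Auxiliary lemmas -/

/-- From C² at a point, get an open neighborhood on which f is C². -/
lemma contDiffAt_two_open {E : Type*} [NormedAddCommGroup E] [NormedSpace ℝ E]
    {f : E → ℝ} {a : E} (hf : ContDiffAt ℝ 2 f a) :
    ∃ V : Set E, IsOpen V ∧ a ∈ V ∧ ContDiffOn ℝ 2 f V := by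
  obtain ⟨u, hu, hfu⟩ := hf.contDiffOn le_rfl (by simp)
  obtain ⟨V, hVu, hVopen, haV⟩ := mem_nhds_iff.1 hu
  exact ⟨V, hVopen, haV, hfu.mono hVu⟩

lemma deriv_differentiableAt_of_contDiffAt {f : ℝ → ℝ} {a : ℝ}
    (hf : ContDiffAt ℝ 2 f a) : DifferentiableAt ℝ (deriv f) a := by
  obtain ⟨V, hVo, haV, hfV⟩ := contDiffAt_two_open hf
  have h1 : ContDiffOn ℝ 1 (deriv f) V := hfV.deriv_of_isOpen hVo (by norm_num)
  exact (h1.differentiableOn (by norm_num)).differentiableAt (hVo.mem_nhds haV)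

/-- Second derivative test at a local maximum. -/
lemma second_deriv_nonpos_of_isLocalMax {f : ℝ → ℝ} {a : ℝ}
    (hf : ContDiffAt ℝ 2 f a) (hmax : IsLocalMax f a) :
    deriv (deriv f) a ≤ 0 := by
  by_contra hpos
  push_neg at hpos
  obtain ⟨V, hVo, haV, hfV⟩ := contDiffAt_two_open hf
  have hd0 : deriv f a = 0 := hmax.deriv_eq_zero
  have hD : HasDerivAt (deriv f) (deriv (deriv f) a) a :=
    (deriv_differentiableAt_of_contDiffAt hf).hasDerivAt
  have hslope := hasDerivAt_iff_tendsto_slope.1 hD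
  have hev : ∀ᶠ x in 𝓝[>] a, 0 < slope (deriv f) a x := by
    have : ∀ᶠ x in 𝓝[≠] a, 0 < slope (deriv f) a x :=
      hslope.eventually (eventually_gt_nhds hpos)
    exact nhdsWithin_mono a (fun x hx => ne_of_gt hx) this
  have hpos' : ∀ᶠ x in 𝓝[>] a, 0 < deriv f x := by
    filter_upwards [hev, self_mem_nhdsWithin] with x hx hx'
    have hxa : a < x := hx'
    rw [slope_def_field, hd0, sub_zero] at hx
    have := mul_pos hx (sub_pos.2 hxa)
    rwa [div_mul_cancel₀] at this
    exact ne_of_gt (sub_pos.2 hxa)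
  obtain ⟨b1, hb1, hIb1⟩ := mem_nhdsGT_iff_exists_Ioc_subset.1 hpos'
  obtain ⟨d2, hd2, hball2⟩ := Metric.mem_nhds_iff.1 (hVo.mem_nhds haV)
  obtain ⟨d3, hd3, hball3⟩ := Metric.mem_nhds_iff.1 hmax
  set b := min b1 (a + min d2 d3 / 2) with hb
  have hab : a < b := lt_min hb1 (by have := lt_min hd2 hd3; linarith)
  have hsub : Icc a b ⊆ V := by
    intro x hx
    apply hball2
    rw [Metric.mem_ball, Real.dist_eq, abs_lt]
    constructor
    · linarith [hx.1]
    · have : x ≤ b := hx.2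
      have hbb : b ≤ a + min d2 d3 / 2 := min_le_right _ _
      have : min d2 d3 ≤ d2 := min_le_left _ _
      linarith [hx.2, min_le_left d2 d3]
  have hcont : ContinuousOn f (Icc a b) := (hfV.continuousOn).mono hsub
  have hdiff : DifferentiableOn ℝ f (Ioo a b) :=
    ((hfV.differentiableOn (by norm_num)).mono (fun x hx => hsub ⟨le_of_lt hx.1, le_of_lt hx.2⟩))
  obtain ⟨c, hc, hceq⟩ := exists_deriv_eq_slope f hab hcont hdiff
  have hcpos : 0 < deriv f c := by
    apply hIb1
    exact ⟨hc.1, le_trans (le_of_lt hc.2) (min_le_left _ _)⟩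
  have hfb : f b ≤ f a := by
    apply hball3
    rw [Metric.mem_ball, Real.dist_eq, abs_lt]
    constructor
    · linarith
    · have hbb : b ≤ a + min d2 d3 / 2 := min_le_right _ _
      linarith [min_le_right d2 d3]
  rw [hceq] at hcpos
  have : (f b - f a) / (b - a) ≤ 0 :=
    div_nonpos_of_nonpos_of_nonneg (by linarith) (by linarith)
  linarith

lemma second_deriv_line {E : Type*} [NormedAddCommGroup E] [NormedSpace ℝ E]
    {f : E → ℝ} {x : E} (v : E) (hf : ContDiffAt ℝ 2 f x) :
    deriv (deriv (fun s : ℝ => f (x + s • v))) 0 = fderiv ℝ (fderiv ℝ f) x v v := by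
  obtain ⟨u, hu, hfu⟩ := hf.contDiffOn le_rfl (by simp)
  obtain ⟨V, hVu, hVopen, hxV⟩ := mem_nhds_iff.1 hu
  have hfV : ContDiffOn ℝ 2 f V := hfu.mono hVu
  set L : ℝ → E := fun s => x + s • v with hL
  have hL0 : L 0 = x := by simp [hL]
  have hLc : Continuous L := by fun_prop
  have hLd : ∀ s : ℝ, HasDerivAt L v s := fun s => by
    have := ((hasDerivAt_id s).smul_const v).const_add x; rw [one_smul] at this; exact this
  have hevV : ∀ᶠ s in 𝓝 (0:ℝ), L s ∈ V := by
    have := hLc.tendsto 0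
    rw [hL0] at this
    exact this.eventually (hVopen.mem_nhds hxV)
  have hkey : (fun s => deriv (fun s' : ℝ => f (L s')) s) =ᶠ[𝓝 (0:ℝ)]
      fun s => fderiv ℝ f (L s) v := by
    filter_upwards [hevV] with s hs
    have hdf : DifferentiableAt ℝ f (L s) :=
      ((hfV.differentiableOn (by norm_num)).differentiableAt (hVopen.mem_nhds hs))
    exact (hdf.hasFDerivAt.comp_hasDerivAt s (hLd s)).deriv
  rw [hkey.deriv_eq]
  have hdf2 : DifferentiableAt ℝ (fderiv ℝ f) x := by
    have h1 : ContDiffOn ℝ 1 (fderiv ℝ f) V := hfV.fderiv_of_isOpen hVopen (by norm_num)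
    exact (h1.differentiableOn (by norm_num)).differentiableAt (hVopen.mem_nhds hxV)
  have H1 : HasDerivAt (fun s => fderiv ℝ f (L s)) (fderiv ℝ (fderiv ℝ f) x v) 0 := by
    exact hdf2.hasFDerivAt.comp_hasDerivAt_of_eq 0 (hLd 0) hL0.symm
  have H2 : HasDerivAt (fun s => (fderiv ℝ f (L s)) v) ((fderiv ℝ (fderiv ℝ f) x v) v) 0 := by
    simpa using H1.clm_apply (hasDerivAt_const (0:ℝ) v)
  exact H2.deriv

lemma second_deriv_line' {E : Type*} [NormedAddCommGroup E] [NormedSpace ℝ E]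
    {f : E → ℝ} {x : E} (v : E) (hf : ContDiffAt ℝ 2 f x) :
    iteratedFDeriv ℝ 2 f x ![v, v] = deriv (deriv (fun s : ℝ => f (x + s • v))) 0 := by
  rw [second_deriv_line v hf, iteratedFDeriv_two_apply]
  simp

lemma sph_coe_ne_zero {n : ℕ} (θ : Sph n) : (θ : Euc n) ≠ 0 := by
  intro h
  have := mem_sphere_zero_iff_norm.1 θ.2
  rw [h] at this
  simp at this

/-- unit-sphere projection of a nonzero vector. -/
def unitize {n : ℕ} (x : Euc n) (hx : x ≠ 0) : Sph n :=
  ⟨‖x‖⁻¹ • x, by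
    rw [mem_sphere_zero_iff_norm, norm_smul, norm_inv, norm_norm]
    exact inv_mul_cancel₀ (norm_ne_zero_iff.mpr hx)⟩

lemma sphExt_ne {n : ℕ} (g : Sph n → ℝ) {x : Euc n} (hx : x ≠ 0) :
    sphExt g x = g (unitize x hx) := dif_neg hx

lemma sphExt_coe {n : ℕ} (g : Sph n → ℝ) (θ : Sph n) : sphExt g (θ : Euc n) = g θ := by
  rw [sphExt_ne g (sph_coe_ne_zero θ)]
  congr 1
  apply Subtype.ext
  show ‖(θ : Euc n)‖⁻¹ • (θ : Euc n) = (θ : Euc n)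
  rw [mem_sphere_zero_iff_norm.1 θ.2]
  simp

set_option maxHeartbeats 1000000 in
/-- Comparison lemma on the half cylinder: a nonnegative smooth subsolution of
`∂ₜ² + Δ_{Sⁿ⁻¹} - α²` with an a priori two-sided exponential bound decays at rate `α`. -/
theorem stmt0 {n : ℕ} (hn : 2 ≤ n) (T0 α : ℝ) (hα : 0 < α)
    (g : ℝ → Sph n → ℝ)
    (hsm : cylSmoothOn g T0)
    (hnonneg : ∀ t ≥ T0, ∀ θ : Sph n, 0 ≤ g t θ)
    (hineq : ∀ t ≥ T0, ∀ θ : Sph n,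
      deriv (deriv (fun s => g s θ)) t + sphLap (g t) θ - α ^ 2 * g t θ ≥ 0)
    (c1 c2 lam1 lam2 : ℝ) (hc1 : 0 ≤ c1) (hc2 : 0 ≤ c2) (hlam1 : 0 ≤ lam1)
    (hlam2 : 0 ≤ lam2) (hlam2α : lam2 < α)
    (hbd : ∀ t ≥ T0, ∀ θ : Sph n, g t θ ≤ c1 * exp (-lam1 * t) + c2 * exp (lam2 * t)) :
    ∀ t ≥ T0, ∀ θ : Sph n,
      g t θ ≤ (c1 * exp (-lam1 * T0) + c2 * exp (lam2 * T0)) * exp (-α * (t - T0)) := by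
  set C := c1 * exp (-lam1 * T0) + c2 * exp (lam2 * T0) with hCdef
  have hC : 0 ≤ C := by positivity
  set μ := (lam2 + α) / 2 with hμdef
  have hμ1 : lam2 < μ := by rw [hμdef]; linarith
  have hμ2 : μ < α := by rw [hμdef]; linarith
  have hμ0 : 0 < μ := lt_of_le_of_lt hlam2 hμ1
  set F : ℝ × Euc n → ℝ := fun p => sphExt (g p.1) p.2 with hFdef
  have hF : ContDiffOn ℝ (⊤ : ℕ∞) F (Set.Ici T0 ×ˢ {x : Euc n | x ≠ 0}) := hsm
  -- the key claim with a perturbation ε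
  have key : ∀ ε > 0, ∀ t ≥ T0, ∀ θ : Sph n,
      g t θ ≤ C * exp (-α * (t - T0)) + ε * exp (μ * (t - T0)) := by
    intro ε hε
    set ψ : ℝ → ℝ := fun t => C * exp (-α * (t - T0)) + ε * exp (μ * (t - T0)) with hψdef
    by_contra hcon
    push_neg at hcon
    obtain ⟨ts, hts, θs, hgs⟩ := hcon
    -- derivative facts for ψ
    have hexp : ∀ (k c t : ℝ), HasDerivAt (fun t => k * exp (c * (t - T0)))
        (k * c * exp (c * (t - T0))) t := by
      intro k c t
      have h1 : HasDerivAt (fun t => c * (t - T0)) c t := by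
        simpa using ((hasDerivAt_id t).sub_const T0).const_mul c
      have := h1.exp.const_mul k
      rw [show k * c * exp (c * (t - T0)) = k * (exp (c * (t - T0)) * c) by ring]
      exact this
    have hψ : ∀ t, HasDerivAt ψ (C * (-α) * exp (-α * (t - T0)) + ε * μ * exp (μ * (t - T0))) t :=
      fun t => (hexp C (-α) t).add (hexp ε μ t)
    have hψderiv : deriv ψ = fun t => C * (-α) * exp (-α * (t - T0)) + ε * μ * exp (μ * (t - T0)) :=
      funext fun t => (hψ t).deriv
    have hψ2 : ∀ t, HasDerivAt (deriv ψ)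
        (C * (-α) * (-α) * exp (-α * (t - T0)) + ε * μ * μ * exp (μ * (t - T0))) t := by
      intro t
      rw [hψderiv]
      exact (hexp (C * (-α)) (-α) t).add (hexp (ε * μ) μ t)
    have hψsm : ContDiff ℝ 2 ψ := by
      rw [hψdef]
      apply ContDiff.add <;>
        exact contDiff_const.mul
          (Real.contDiff_exp.comp (contDiff_const.mul (contDiff_id.sub contDiff_const)))
    -- eventually in t, the a priori bound is below the barrier
    have hlin1 : Tendsto (fun t : ℝ => c1 * exp (-lam1 * t - μ * (t - T0))) atTop (𝓝 0) := by
      have h0 : Tendsto (fun t : ℝ => -lam1 * t - μ * (t - T0)) atTop atBot := by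
        have hrw : (fun t : ℝ => -lam1 * t - μ * (t - T0)) =
            fun t => -((lam1 + μ) * t) + μ * T0 := by funext t; ring
        rw [hrw]
        apply Filter.tendsto_atBot_add_const_right
        exact tendsto_neg_atTop_atBot.comp
          (Filter.Tendsto.const_mul_atTop (by linarith) tendsto_id)
      have := (Real.tendsto_exp_atBot.comp h0).const_mul c1
      simpa using this
    have hlin2 : Tendsto (fun t : ℝ => c2 * exp (lam2 * t - μ * (t - T0))) atTop (𝓝 0) := by
      have h0 : Tendsto (fun t : ℝ => lam2 * t - μ * (t - T0)) atTop atBot := by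
        have hrw : (fun t : ℝ => lam2 * t - μ * (t - T0)) =
            fun t => -((μ - lam2) * t) + μ * T0 := by funext t; ring
        rw [hrw]
        apply Filter.tendsto_atBot_add_const_right
        exact tendsto_neg_atTop_atBot.comp
          (Filter.Tendsto.const_mul_atTop (by linarith) tendsto_id)
      have := (Real.tendsto_exp_atBot.comp h0).const_mul c2
      simpa using this
    have hq : Tendsto (fun t : ℝ => c1 * exp (-lam1 * t - μ * (t - T0)) +
        c2 * exp (lam2 * t - μ * (t - T0))) atTop (𝓝 0) := by
      simpa using hlin1.add hlin2
    have hevsmall : ∀ᶠ t in atTop, c1 * exp (-lam1 * t - μ * (t - T0)) +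
        c2 * exp (lam2 * t - μ * (t - T0)) < ε := hq.eventually (gt_mem_nhds hε)
    obtain ⟨T1', hT1'⟩ := eventually_atTop.1 hevsmall
    set T1 := max T1' (max T0 ts) with hT1def
    have hT1T0 : T0 ≤ T1 := le_trans (le_max_left _ _) (le_max_right _ _)
    have hT1ts : ts ≤ T1 := le_trans (le_max_right _ _) (le_max_right _ _)
    -- beyond T1 the difference is nonpositive
    have hzero : ∀ t, T1 ≤ t → ∀ θ : Sph n, g t θ - ψ t ≤ 0 := by
      intro t ht θ
      have htT0 : T0 ≤ t := le_trans hT1T0 ht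
      have hb := hbd t htT0 θ
      have hsmall := hT1' t (le_trans (le_max_left _ _) ht)
      have hE : (0:ℝ) < exp (μ * (t - T0)) := exp_pos _
      have e1 : exp (-lam1 * t) = exp (-lam1 * t - μ * (t - T0)) * exp (μ * (t - T0)) := by
        rw [← exp_add]; ring_nf
      have e2 : exp (lam2 * t) = exp (lam2 * t - μ * (t - T0)) * exp (μ * (t - T0)) := by
        rw [← exp_add]; ring_nf
      have hbound : c1 * exp (-lam1 * t) + c2 * exp (lam2 * t) ≤ ε * exp (μ * (t - T0)) := by
        rw [e1, e2]
        calc c1 * (exp (-lam1 * t - μ * (t - T0)) * exp (μ * (t - T0))) +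
            c2 * (exp (lam2 * t - μ * (t - T0)) * exp (μ * (t - T0)))
            = (c1 * exp (-lam1 * t - μ * (t - T0)) +
              c2 * exp (lam2 * t - μ * (t - T0))) * exp (μ * (t - T0)) := by ring
          _ ≤ ε * exp (μ * (t - T0)) :=
            mul_le_mul_of_nonneg_right (le_of_lt hsmall) (le_of_lt hE)
      have hCe : 0 ≤ C * exp (-α * (t - T0)) := by positivity
      have hψval : ψ t = C * exp (-α * (t - T0)) + ε * exp (μ * (t - T0)) := rfl
      linarith
    -- continuity of the difference on the compact cylinder piece
    set hfun : ℝ × Sph n → ℝ := fun p => g p.1 p.2 - ψ p.1 with hfundef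
    have hcontψ : Continuous ψ := hψsm.continuous
    have hcont : ContinuousOn hfun ((Icc T0 T1) ×ˢ (univ : Set (Sph n))) := by
      apply ContinuousOn.sub
      · have hj : Continuous (fun p : ℝ × Sph n => ((p.1 : ℝ), (p.2 : Euc n))) :=
          continuous_fst.prodMk (continuous_subtype_val.comp continuous_snd)
        have h1 : ContinuousOn (fun p : ℝ × Sph n => F (p.1, (p.2 : Euc n)))
            ((Icc T0 T1) ×ˢ (univ : Set (Sph n))) := by
          apply hF.continuousOn.comp hj.continuousOn
          intro p hp
          exact ⟨hp.1.1, sph_coe_ne_zero p.2⟩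
        apply h1.congr
        intro p _
        exact (sphExt_coe (g p.1) p.2).symm
      · exact (hcontψ.comp continuous_fst).continuousOn
    have hKc : IsCompact ((Icc T0 T1) ×ˢ (univ : Set (Sph n))) := by
      apply IsCompact.prod isCompact_Icc
      exact isCompact_iff_isCompact_univ.1 (isCompact_sphere (0 : Euc n) 1)
    have hKne : ((Icc T0 T1) ×ˢ (univ : Set (Sph n))).Nonempty :=
      ⟨(ts, θs), ⟨⟨hts, hT1ts⟩, mem_univ _⟩⟩
    obtain ⟨⟨t₀, θ₀⟩, hmem, hmax⟩ := hKc.exists_isMaxOn hKne hcont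
    set M := hfun (t₀, θ₀) with hMdef
    have hMpos : 0 < M := by
      have h1 : 0 < hfun (ts, θs) := by
        show 0 < g ts θs - ψ ts
        have hψts : ψ ts = C * exp (-α * (ts - T0)) + ε * exp (μ * (ts - T0)) := rfl
        linarith
      have hmem' : ((ts, θs) : ℝ × Sph n) ∈ (Icc T0 T1) ×ˢ (univ : Set (Sph n)) :=
        ⟨⟨hts, hT1ts⟩, mem_univ _⟩
      exact lt_of_lt_of_le h1 (hmax hmem')
    have hglob : ∀ t, T0 ≤ t → ∀ θ : Sph n, g t θ - ψ t ≤ M := by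
      intro t ht θ
      by_cases h : t ≤ T1
      · have hmem' : ((t, θ) : ℝ × Sph n) ∈ (Icc T0 T1) ×ˢ (univ : Set (Sph n)) :=
          ⟨⟨ht, h⟩, mem_univ θ⟩
        exact hmax hmem'
      · exact le_trans (hzero t (le_of_lt (lt_of_not_ge h)) θ) (le_of_lt hMpos)
    have ht₀mem : t₀ ∈ Icc T0 T1 := hmem.1
    have ht₀gt : T0 < t₀ := by
      rcases lt_or_eq_of_le ht₀mem.1 with h | h
      · exact h
      · exfalso
        have hb := hbd T0 le_rfl θ₀
        rw [← hCdef] at hb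
        have hM' : M = g t₀ θ₀ - ψ t₀ := rfl
        rw [← h] at hM'
        have hψT0 : ψ T0 = C + ε := by simp [hψdef]
        rw [hψT0] at hM'
        linarith
    set θ₀v : Euc n := (θ₀ : Euc n) with hθ₀vdef
    have hθ₀ : θ₀v ≠ 0 := sph_coe_ne_zero θ₀
    set q₀ : ℝ × Euc n := (t₀, θ₀v) with hq₀def
    have hDnhds : (Set.Ici T0 ×ˢ {x : Euc n | x ≠ 0}) ∈ 𝓝 q₀ :=
      prod_mem_nhds (Ici_mem_nhds ht₀gt) (isOpen_ne.mem_nhds hθ₀)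
    have hFq : ContDiffAt ℝ 2 F q₀ := (hF.contDiffAt hDnhds).of_le (WithTop.coe_le_coe.2 (le_top : (2 : ℕ∞) ≤ ⊤))
    have hFq₀val : F q₀ = g t₀ θ₀ := sphExt_coe (g t₀) θ₀
    -- local maximality of the extended function
    have HlocMax : ∀ᶠ p in 𝓝 q₀, F p - ψ p.1 ≤ M := by
      have h1 : ∀ᶠ p : ℝ × Euc n in 𝓝 q₀, T0 < p.1 :=
        (continuous_fst.tendsto q₀).eventually (eventually_gt_nhds ht₀gt)
      have h2 : ∀ᶠ p : ℝ × Euc n in 𝓝 q₀, p.2 ≠ 0 :=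
        (continuous_snd.tendsto q₀).eventually (isOpen_ne.eventually_mem hθ₀)
      filter_upwards [h1, h2] with p hp1 hp2
      have : F p = g p.1 (unitize p.2 hp2) := sphExt_ne (g p.1) hp2
      rw [this]
      exact hglob p.1 (le_of_lt hp1) _
    -- the time slice
    set u : ℝ → ℝ := fun s => F (s, θ₀v) - ψ s with hudef
    have hu2 : ContDiffAt ℝ 2 u t₀ := by
      apply ContDiffAt.sub
      · exact hFq.comp t₀ ((contDiff_id.prodMk contDiff_const).contDiffAt)
      · exact hψsm.contDiffAt
    have hu0 : u t₀ = M := by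
      simp only [hudef]
      rw [show ((t₀ : ℝ), θ₀v) = q₀ from rfl, hFq₀val]
    have humax : IsLocalMax u t₀ := by
      have hι : Continuous (fun s : ℝ => ((s : ℝ), θ₀v)) :=
        continuous_id.prodMk continuous_const
      have := (hι.tendsto t₀).eventually HlocMax
      unfold IsLocalMax IsMaxFilter
      rw [hu0]
      filter_upwards [this] with s hs
      exact hs
    have hu'' : deriv (deriv u) t₀ ≤ 0 := second_deriv_nonpos_of_isLocalMax hu2 humax
    -- decompose the second derivative of the time slice of g
    have hgslice : deriv (deriv (fun s => g s θ₀)) t₀ =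
        deriv (deriv u) t₀ + deriv (deriv ψ) t₀ := by
      have hrepr : (fun s => g s θ₀) = fun s => u s + ψ s := by
        funext s
        simp only [hudef]
        rw [sub_add_cancel]
        exact (sphExt_coe (g s) θ₀).symm
      rw [hrepr]
      have hevd : ∀ᶠ s in 𝓝 t₀, DifferentiableAt ℝ u s := by
        filter_upwards [hu2.eventually (by simp)] with s hs
        exact hs.differentiableAt two_ne_zero
      have e1 : deriv (fun s => u s + ψ s) =ᶠ[𝓝 t₀] fun s => deriv u s + deriv ψ s := by
        filter_upwards [hevd] with s hs
        exact deriv_add hs (hψ s).differentiableAt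
      rw [e1.deriv_eq]
      exact deriv_add (deriv_differentiableAt_of_contDiffAt hu2) (hψ2 t₀).differentiableAt
    -- the sphere slices: Laplacian is nonpositive at the max
    have hFx2 : ContDiffAt ℝ 2 (sphExt (g t₀)) θ₀v := by
      have heq : (fun x : Euc n => F (t₀, x)) = sphExt (g t₀) := rfl
      rw [← heq]
      exact hFq.comp θ₀v ((contDiff_const.prodMk contDiff_id).contDiffAt)
    have hxmax : IsLocalMax (sphExt (g t₀)) θ₀v := by
      have hι : Continuous (fun x : Euc n => ((t₀ : ℝ), x)) :=
        continuous_const.prodMk continuous_id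
      have h1 := (hι.tendsto θ₀v).eventually HlocMax
      unfold IsLocalMax IsMaxFilter
      have hval : sphExt (g t₀) θ₀v = M + ψ t₀ := by
        rw [show sphExt (g t₀) θ₀v = F q₀ from rfl, hFq₀val]
        simp only [hMdef, hfundef]
        ring
      rw [hval]
      filter_upwards [h1] with x hx
      have : F (t₀, x) = sphExt (g t₀) x := rfl
      rw [this] at hx
      linarith
    have hlap : sphLap (g t₀) θ₀ ≤ 0 := by
      unfold sphLap lap
      apply Finset.sum_nonpos
      intro i _
      rw [second_deriv_line' _ hFx2]
      apply second_deriv_nonpos_of_isLocalMax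
      · have hline : ContDiffAt ℝ 2
            (fun s : ℝ => θ₀v + s • (EuclideanSpace.single i (1:ℝ))) 0 := by
          apply ContDiff.contDiffAt
          exact contDiff_const.add (contDiff_id.smul contDiff_const)
        have h0 : θ₀v + (0:ℝ) • (EuclideanSpace.single i (1:ℝ)) = θ₀v := by simp
        exact ContDiffAt.comp 0 (h0 ▸ hFx2) hline
      · have hι : Continuous (fun s : ℝ => θ₀v + s • (EuclideanSpace.single i (1:ℝ))) := by
          fun_prop
        have hxmax' : ∀ᶠ x in 𝓝 θ₀v, sphExt (g t₀) x ≤ sphExt (g t₀) θ₀v := hxmax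
        have htend := hι.tendsto 0
        simp only [zero_smul, add_zero] at htend
        have h1 := htend.eventually hxmax'
        unfold IsLocalMax IsMaxFilter
        simp only [zero_smul, add_zero]
        filter_upwards [h1] with s hs
        exact hs
    -- contradiction from the differential inequality
    have hI := hineq t₀ (le_of_lt ht₀gt) θ₀
    have hg0 : g t₀ θ₀ = M + ψ t₀ := by
      simp only [hMdef, hfundef]
      ring
    have hd2ψ : deriv (deriv ψ) t₀ =
        C * (-α) * (-α) * exp (-α * (t₀ - T0)) + ε * μ * μ * exp (μ * (t₀ - T0)) :=
      (hψ2 t₀).deriv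
    have hψt₀ : ψ t₀ = C * exp (-α * (t₀ - T0)) + ε * exp (μ * (t₀ - T0)) := rfl
    have hE1 : (0:ℝ) < exp (-α * (t₀ - T0)) := exp_pos _
    have hE2 : (0:ℝ) < exp (μ * (t₀ - T0)) := exp_pos _
    rw [ge_iff_le, hgslice, hg0, hd2ψ, hψt₀] at hI
    have hμα2 : μ ^ 2 < α ^ 2 := by nlinarith
    nlinarith [mul_pos (mul_pos hε hE2) (sub_pos.2 hμα2), mul_pos (mul_pos hα hα) hMpos]
  -- pass to the limit ε → 0
  intro t ht θ
  have h2 : ∀ ε > 0, g t θ ≤ C * exp (-α * (t - T0)) + ε := by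
    intro ε hε
    have hE : (0:ℝ) < exp (μ * (t - T0)) := exp_pos _
    have := key (ε / exp (μ * (t - T0))) (by positivity) t ht θ
    rwa [div_mul_cancel₀ _ (ne_of_gt hE)] at this
  rcases le_or_gt (g t θ) (C * exp (-α * (t - T0))) with h | h
  · exact h
  · exfalso
    have hpos : 0 < (g t θ - C * exp (-α * (t - T0))) / 2 := half_pos (sub_pos.2 h)
    have h4 := h2 _ hpos
    have h5 : g t θ - C * exp (-α * (t - T0)) ≤ (g t θ - C * exp (-α * (t - T0))) / 2 :=
      sub_le_iff_le_add'.2 h4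
    have h6 : (g t θ - C * exp (-α * (t - T0))) / 2 < g t θ - C * exp (-α * (t - T0)) :=
      half_lt_self (sub_pos.2 h)
    exact absurd (lt_of_le_of_lt h5 h6) (lt_irrefl _)
end
end

section
/- Let $u:U\to\mathbb{R}^K$ be a smooth map on an open set $U\subseteq\mathbb{R}^n$, $n\geq 2$. At any point where $\nabla u\neq 0$, the Hessian-type Kato inequality $|\nabla^2 u|^2\geq\frac{n}{n-1}|\nabla|\nabla u||^2$ holds, provided $u$ is harmonic ($\Delta u=0$). -/
open MeasureTheory Real Set Filter

noncomputable section
open scoped Classical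

section Aux
open Finset

open Finset

lemma kato_scalar {n : ℕ} (hn : 2 ≤ n) (ξ : Fin n → ℝ) (hξ : ∑ i, ξ i ^ 2 = 1)
    (M : Fin n → Fin n → ℝ) (hsym : ∀ i j, M i j = M j i) (htr : ∑ i, M i i = 0) :
    (n : ℝ) * ∑ i, (∑ j, ξ j * M i j) ^ 2 ≤ ((n : ℝ) - 1) * ∑ i, ∑ j, M i j ^ 2 := by
  set b : Fin n → ℝ := fun i => ∑ j, ξ j * M i j with hb
  set c : ℝ := ∑ i, ξ i * b i with hc
  set N : Fin n → Fin n → ℝ := fun i j => M i j - ξ i * b j - ξ j * b i + c * ξ i * ξ j with hN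
  set S : ℝ := ∑ i, ∑ j, M i j ^ 2 with hS
  set B : ℝ := ∑ i, b i ^ 2 with hB
  set T : ℝ := ∑ i, ∑ j, N i j ^ 2 with hT
  have hnR : (2 : ℝ) ≤ (n : ℝ) := by exact_mod_cast hn
  have hbi : ∀ i, b i = ∑ j, ξ j * M i j := fun i => rfl
  have L1 : ∀ j, ∑ i, ξ i * M i j = b j := by
    intro j
    rw [hbi]
    exact Finset.sum_congr rfl fun i _ => by rw [hsym]
  have L2 : ∑ i, ∑ j, M i j * (ξ i * b j) = B := by
    rw [Finset.sum_comm]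
    refine Finset.sum_congr rfl fun j _ => ?_
    have h : ∑ i, M i j * (ξ i * b j) = (∑ i, ξ i * M i j) * b j := by
      rw [Finset.sum_mul]; exact Finset.sum_congr rfl fun i _ => by ring
    rw [h, L1]; ring
  have L3 : ∑ i, ∑ j, M i j * (ξ j * b i) = B := by
    refine Finset.sum_congr rfl fun i _ => ?_
    have h : ∑ j, M i j * (ξ j * b i) = (∑ j, ξ j * M i j) * b i := by
      rw [Finset.sum_mul]; exact Finset.sum_congr rfl fun j _ => by ring
    rw [h, ← hbi]; ring
  have L4 : ∑ i, ∑ j, M i j * (ξ i * ξ j) = c := by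
    rw [hc]
    refine Finset.sum_congr rfl fun i _ => ?_
    have h : ∑ j, M i j * (ξ i * ξ j) = ξ i * ∑ j, ξ j * M i j := by
      rw [Finset.mul_sum]; exact Finset.sum_congr rfl fun j _ => by ring
    rw [h, ← hbi]
  have L5 : ∑ i, ∑ j, ξ i * b j * (ξ j * b i) = c ^ 2 := by
    have h : ∑ i, ∑ j, ξ i * b j * (ξ j * b i) = (∑ i, ξ i * b i) * (∑ j, ξ j * b j) := by
      rw [Finset.sum_mul_sum]
      exact Finset.sum_congr rfl fun i _ => Finset.sum_congr rfl fun j _ => by ring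
    rw [h, ← hc]; ring
  have L6 : ∑ i, ∑ j, (ξ i * b j) ^ 2 = B := by
    have h : ∑ i, ∑ j, (ξ i * b j) ^ 2 = (∑ i, ξ i ^ 2) * (∑ j, b j ^ 2) := by
      rw [Finset.sum_mul_sum]
      exact Finset.sum_congr rfl fun i _ => Finset.sum_congr rfl fun j _ => by ring
    rw [h, hξ, ← hB]; ring
  have L7 : ∑ i, ∑ j, (ξ j * b i) ^ 2 = B := by
    have h : ∑ i, ∑ j, (ξ j * b i) ^ 2 = (∑ i, b i ^ 2) * (∑ j, ξ j ^ 2) := by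
      rw [Finset.sum_mul_sum]
      exact Finset.sum_congr rfl fun i _ => Finset.sum_congr rfl fun j _ => by ring
    rw [h, hξ, ← hB]; ring
  have L8 : ∑ i, ∑ j, (ξ i * ξ j) ^ 2 = 1 := by
    have h : ∑ i, ∑ j, (ξ i * ξ j) ^ 2 = (∑ i, ξ i ^ 2) * (∑ j, ξ j ^ 2) := by
      rw [Finset.sum_mul_sum]
      exact Finset.sum_congr rfl fun i _ => Finset.sum_congr rfl fun j _ => by ring
    rw [h, hξ]; ring
  have L9 : ∑ i, ∑ j, ξ i * b j * (ξ i * ξ j) = c := by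
    have h : ∑ i, ∑ j, ξ i * b j * (ξ i * ξ j) = (∑ i, ξ i ^ 2) * (∑ j, ξ j * b j) := by
      rw [Finset.sum_mul_sum]
      exact Finset.sum_congr rfl fun i _ => Finset.sum_congr rfl fun j _ => by ring
    rw [h, hξ, ← hc]; ring
  have L10 : ∑ i, ∑ j, ξ j * b i * (ξ i * ξ j) = c := by
    have h : ∑ i, ∑ j, ξ j * b i * (ξ i * ξ j) = (∑ i, ξ i * b i) * (∑ j, ξ j ^ 2) := by
      rw [Finset.sum_mul_sum]
      exact Finset.sum_congr rfl fun i _ => Finset.sum_congr rfl fun j _ => by ring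
    rw [h, hξ, ← hc]; ring
  have hTid : T = S - 2 * B + c ^ 2 := by
    have expand : ∀ i j, N i j ^ 2 =
        M i j ^ 2 + (ξ i * b j) ^ 2 + (ξ j * b i) ^ 2 + c ^ 2 * (ξ i * ξ j) ^ 2
          - 2 * (M i j * (ξ i * b j)) - 2 * (M i j * (ξ j * b i))
          + 2 * c * (M i j * (ξ i * ξ j)) + 2 * (ξ i * b j * (ξ j * b i))
          - 2 * c * (ξ i * b j * (ξ i * ξ j)) - 2 * c * (ξ j * b i * (ξ i * ξ j)) := by
      intro i j; simp only [hN]; ring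
    calc T = ∑ i, ∑ j, (M i j ^ 2 + (ξ i * b j) ^ 2 + (ξ j * b i) ^ 2 + c ^ 2 * (ξ i * ξ j) ^ 2
          - 2 * (M i j * (ξ i * b j)) - 2 * (M i j * (ξ j * b i))
          + 2 * c * (M i j * (ξ i * ξ j)) + 2 * (ξ i * b j * (ξ j * b i))
          - 2 * c * (ξ i * b j * (ξ i * ξ j)) - 2 * c * (ξ j * b i * (ξ i * ξ j))) := by
            rw [hT]
            exact Finset.sum_congr rfl fun i _ => Finset.sum_congr rfl fun j _ => expand i j
      _ = S - 2 * B + c ^ 2 := by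
            simp only [Finset.sum_add_distrib, Finset.sum_sub_distrib, ← Finset.mul_sum]
            rw [L2, L3, L4, L5, L6, L7, L8, L9, L10, ← hS]
            ring
  have htrN : ∑ i, N i i = -c := by
    have h : ∀ i, N i i = M i i - 2 * (ξ i * b i) + c * ξ i ^ 2 := by
      intro i; simp only [hN]; ring
    calc ∑ i, N i i = ∑ i, (M i i - 2 * (ξ i * b i) + c * ξ i ^ 2) :=
          Finset.sum_congr rfl fun i _ => h i
      _ = (∑ i, M i i) - 2 * (∑ i, ξ i * b i) + c * ∑ i, ξ i ^ 2 := by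
          simp only [Finset.sum_add_distrib, Finset.sum_sub_distrib, ← Finset.mul_sum]
      _ = -c := by rw [htr, ← hc, hξ]; ring
  have hxxN : ∑ i, ∑ j, ξ i * ξ j * N i j = 0 := by
    have expand : ∀ i j, ξ i * ξ j * N i j =
        M i j * (ξ i * ξ j) - ξ i * b j * (ξ i * ξ j) - ξ j * b i * (ξ i * ξ j)
          + c * (ξ i * ξ j) ^ 2 := by
      intro i j; simp only [hN]; ring
    calc ∑ i, ∑ j, ξ i * ξ j * N i j
        = ∑ i, ∑ j, (M i j * (ξ i * ξ j) - ξ i * b j * (ξ i * ξ j) - ξ j * b i * (ξ i * ξ j)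
            + c * (ξ i * ξ j) ^ 2) :=
          Finset.sum_congr rfl fun i _ => Finset.sum_congr rfl fun j _ => expand i j
      _ = 0 := by
          simp only [Finset.sum_add_distrib, Finset.sum_sub_distrib, ← Finset.mul_sum]
          rw [L4, L9, L10, L8]; ring
  have hPN : c ^ 2 ≤ ((n : ℝ) - 1) * T := by
    set P : Fin n → Fin n → ℝ := fun i j => (if i = j then (1 : ℝ) else 0) - ξ i * ξ j with hP
    have hPNsum : ∑ p : Fin n × Fin n, P p.1 p.2 * N p.1 p.2 = -c := by
      rw [Fintype.sum_prod_type]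
      have h : ∀ i j, P i j * N i j = (if i = j then N i j else 0) - ξ i * ξ j * N i j := by
        intro i j; by_cases hij : i = j <;> simp [hP, hij] <;> ring
      calc ∑ i, ∑ j, P i j * N i j
          = ∑ i, ∑ j, ((if i = j then N i j else 0) - ξ i * ξ j * N i j) :=
            Finset.sum_congr rfl fun i _ => Finset.sum_congr rfl fun j _ => h i j
        _ = (∑ i, ∑ j, (if i = j then N i j else 0)) - ∑ i, ∑ j, ξ i * ξ j * N i j := by
            simp only [Finset.sum_sub_distrib]
        _ = -c := by
            rw [hxxN]
            simp only [Finset.sum_ite_eq, Finset.mem_univ, if_true, htrN]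
            ring
    have hPsq : ∑ p : Fin n × Fin n, P p.1 p.2 ^ 2 = (n : ℝ) - 1 := by
      rw [Fintype.sum_prod_type]
      have h : ∀ i j, P i j ^ 2 = (if i = j then (1 : ℝ) else 0)
          - 2 * (if i = j then ξ i * ξ j else 0) + (ξ i * ξ j) ^ 2 := by
        intro i j; by_cases hij : i = j <;> simp [hP, hij] <;> ring
      calc ∑ i, ∑ j, P i j ^ 2
          = ∑ i, ∑ j, ((if i = j then (1 : ℝ) else 0)
              - 2 * (if i = j then ξ i * ξ j else 0) + (ξ i * ξ j) ^ 2) :=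
            Finset.sum_congr rfl fun i _ => Finset.sum_congr rfl fun j _ => h i j
        _ = (∑ i : Fin n, ∑ j : Fin n, (if i = j then (1 : ℝ) else 0))
              - 2 * (∑ i, ∑ j, (if i = j then ξ i * ξ j else 0))
              + ∑ i, ∑ j, (ξ i * ξ j) ^ 2 := by
            simp only [Finset.sum_add_distrib, Finset.sum_sub_distrib, ← Finset.mul_sum]
        _ = (n : ℝ) - 1 := by
            have hd1 : ∑ i : Fin n, ∑ j : Fin n, (if i = j then (1 : ℝ) else 0) = (n : ℝ) := by
              simp
            have hd2 : ∑ i : Fin n, ∑ j : Fin n, (if i = j then ξ i * ξ j else 0)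
                = ∑ i : Fin n, ξ i * ξ i := by
              simp
            have hd3 : ∑ i : Fin n, ξ i * ξ i = 1 := by
              rw [← hξ]; exact Finset.sum_congr rfl fun i _ => (sq (ξ i)).symm
            rw [hd1, hd2, hd3, L8]; ring
    have cs := Finset.sum_mul_sq_le_sq_mul_sq Finset.univ
      (fun p : Fin n × Fin n => P p.1 p.2) (fun p : Fin n × Fin n => N p.1 p.2)
    rw [hPNsum, hPsq] at cs
    have hTprod : ∑ p : Fin n × Fin n, N p.1 p.2 ^ 2 = T := by
      rw [Fintype.sum_prod_type, hT]
    rw [hTprod] at cs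
    calc c ^ 2 = (-c) ^ 2 := by ring
      _ ≤ ((n : ℝ) - 1) * T := cs
  have hcB : c ^ 2 ≤ B := by
    have cs := Finset.sum_mul_sq_le_sq_mul_sq Finset.univ ξ b
    rw [hξ, one_mul, ← hB] at cs
    calc c ^ 2 = (∑ i, ξ i * b i) ^ 2 := by rw [hc]
      _ ≤ B := cs
  have h3 : 0 ≤ ((n : ℝ) - 2) * (B - c ^ 2) :=
    mul_nonneg (by linarith) (by linarith)
  have hS2 : ((n : ℝ) - 1) * S = ((n : ℝ) - 1) * (T + 2 * B - c ^ 2) := by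
    rw [show S = T + 2 * B - c ^ 2 by linarith]
  nlinarith [hPN, h3, hS2]



lemma euc_norm_sq {K : ℕ} (x : EuclideanSpace ℝ (Fin K)) : ‖x‖ ^ 2 = ∑ a, x a ^ 2 := by
  rw [EuclideanSpace.norm_eq, Real.sq_sqrt (by positivity)]
  exact Finset.sum_congr rfl fun a _ => by rw [Real.norm_eq_abs, sq_abs]


lemma kato_vec {n K : ℕ} (hn : 2 ≤ n) (v : Fin n → EuclideanSpace ℝ (Fin K))
    (A : Fin n → Fin n → EuclideanSpace ℝ (Fin K))
    (hsym : ∀ i j, A i j = A j i) (htr : ∑ i, A i i = 0) :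
    (n : ℝ) * ∑ j, (∑ i, (inner ℝ (v i) (A i j) : ℝ)) ^ 2 ≤
      ((n : ℝ) - 1) * ((∑ i, ‖v i‖ ^ 2) * ∑ i, ∑ j, ‖A i j‖ ^ 2) := by
  have hnR : (2 : ℝ) ≤ (n : ℝ) := by exact_mod_cast hn
  set w : Fin n → ℝ := fun j => ∑ i, (inner ℝ (v i) (A i j) : ℝ) with hw
  have hwj : ∀ j, w j = ∑ i, (inner ℝ (v i) (A i j) : ℝ) := fun j => rfl
  set W : ℝ := ∑ j, w j ^ 2 with hW
  set g : ℝ := ∑ i, ‖v i‖ ^ 2 with hg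
  set S : ℝ := ∑ i, ∑ j, ‖A i j‖ ^ 2 with hS
  have hW0 : 0 ≤ W := Finset.sum_nonneg fun j _ => sq_nonneg _
  have hg0 : 0 ≤ g := Finset.sum_nonneg fun i _ => sq_nonneg _
  have hS0 : 0 ≤ S := Finset.sum_nonneg fun i _ =>
    Finset.sum_nonneg fun j _ => sq_nonneg _
  by_cases hWz : W = 0
  · rw [hWz, mul_zero]
    exact mul_nonneg (by linarith) (mul_nonneg hg0 hS0)
  have hWpos : 0 < W := lt_of_le_of_ne hW0 (Ne.symm hWz)
  have hsW : 0 < Real.sqrt W := Real.sqrt_pos.2 hWpos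
  set ξ : Fin n → ℝ := fun j => w j / Real.sqrt W with hξdef
  have hξ : ∑ j, ξ j ^ 2 = 1 := by
    have : ∀ j, ξ j ^ 2 = w j ^ 2 / W := by
      intro j
      rw [hξdef]
      rw [div_pow, Real.sq_sqrt hW0]
    rw [Finset.sum_congr rfl fun j _ => this j, ← Finset.sum_div, ← hW, div_self hWz]
  set B : Fin n → EuclideanSpace ℝ (Fin K) := fun i => ∑ j, ξ j • A i j with hBdef
  have hBa : ∀ i a, B i a = ∑ j, ξ j * A i j a := by
    intro i a
    rw [hBdef]
    simp
  -- step (*): n * ∑ i, ‖B i‖² ≤ (n-1) * S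
  have hstar : (n : ℝ) * ∑ i, ‖B i‖ ^ 2 ≤ ((n : ℝ) - 1) * S := by
    have h1 : ∑ i, ‖B i‖ ^ 2 = ∑ a : Fin K, ∑ i, (∑ j, ξ j * A i j a) ^ 2 := by
      rw [Finset.sum_comm]
      exact Finset.sum_congr rfl fun i _ => by
        rw [euc_norm_sq]
        exact Finset.sum_congr rfl fun a _ => by rw [hBa]
    have h2 : S = ∑ a : Fin K, ∑ i, ∑ j, A i j a ^ 2 := by
      rw [hS]
      rw [show ∑ a : Fin K, ∑ i, ∑ j, A i j a ^ 2 = ∑ i, ∑ a : Fin K, ∑ j, A i j a ^ 2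
        from Finset.sum_comm]
      refine Finset.sum_congr rfl fun i _ => ?_
      rw [show ∑ a : Fin K, ∑ j, A i j a ^ 2 = ∑ j, ∑ a : Fin K, A i j a ^ 2
        from Finset.sum_comm]
      exact Finset.sum_congr rfl fun j _ => euc_norm_sq _
    rw [h1, h2, Finset.mul_sum, Finset.mul_sum]
    refine Finset.sum_le_sum fun a _ => ?_
    refine kato_scalar hn ξ hξ (fun i j => A i j a) (fun i j => ?_) ?_
    · have := hsym i j
      exact congrArg (fun z => z a) this
    · have h0 : ∑ i, A i i a = (∑ i, A i i) a := by simp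
      rw [h0, htr]
      rfl
  -- step (**): W ≤ g * ∑ i, ‖B i‖²
  have hstar2 : W ≤ g * ∑ i, ‖B i‖ ^ 2 := by
    have key : ∑ i, (inner ℝ (v i) (B i) : ℝ) = Real.sqrt W := by
      have h1 : ∀ i, (inner ℝ (v i) (B i) : ℝ) = ∑ j, ξ j * (inner ℝ (v i) (A i j) : ℝ) := by
        intro i
        rw [hBdef]
        rw [inner_sum]
        exact Finset.sum_congr rfl fun j _ => real_inner_smul_right _ _ _
      rw [Finset.sum_congr rfl fun i _ => h1 i, Finset.sum_comm]
      have h2 : ∀ j, ∑ i, ξ j * (inner ℝ (v i) (A i j) : ℝ) = w j ^ 2 / Real.sqrt W := by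
        intro j
        rw [← Finset.mul_sum, ← hwj, hξdef]
        ring
      rw [Finset.sum_congr rfl fun j _ => h2 j, ← Finset.sum_div, ← hW, Real.div_sqrt]
    have cs : (∑ i, (inner ℝ (v i) (B i) : ℝ)) ^ 2 ≤ g * ∑ i, ‖B i‖ ^ 2 := by
      set V : PiLp 2 (fun _ : Fin n => EuclideanSpace ℝ (Fin K)) := WithLp.toLp 2 v with hV
      set Bp : PiLp 2 (fun _ : Fin n => EuclideanSpace ℝ (Fin K)) := WithLp.toLp 2 B with hBp
      have hinner : (inner ℝ V Bp : ℝ) = ∑ i, (inner ℝ (v i) (B i) : ℝ) := by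
        rw [PiLp.inner_apply]
      have := real_inner_mul_inner_self_le V Bp
      rw [hinner] at this
      have hVV : (inner ℝ V V : ℝ) = g := by
        rw [PiLp.inner_apply, hg]
        exact Finset.sum_congr rfl fun i _ => real_inner_self_eq_norm_sq _
      have hBB : (inner ℝ Bp Bp : ℝ) = ∑ i, ‖B i‖ ^ 2 := by
        rw [PiLp.inner_apply]
        exact Finset.sum_congr rfl fun i _ => real_inner_self_eq_norm_sq _
      rw [hVV, hBB] at this
      calc (∑ i, (inner ℝ (v i) (B i) : ℝ)) ^ 2
          = (∑ i, (inner ℝ (v i) (B i) : ℝ)) * (∑ i, (inner ℝ (v i) (B i) : ℝ)) := sq _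
        _ ≤ g * ∑ i, ‖B i‖ ^ 2 := this
    rw [key, Real.sq_sqrt hW0] at cs
    exact cs
  -- combine
  have h4 : (n : ℝ) * W ≤ (n : ℝ) * (g * ∑ i, ‖B i‖ ^ 2) :=
    mul_le_mul_of_nonneg_left hstar2 (by linarith)
  have h5 : (n : ℝ) * (g * ∑ i, ‖B i‖ ^ 2) = g * ((n : ℝ) * ∑ i, ‖B i‖ ^ 2) := by ring
  have h6 : g * ((n : ℝ) * ∑ i, ‖B i‖ ^ 2) ≤ g * (((n : ℝ) - 1) * S) :=
    mul_le_mul_of_nonneg_left hstar hg0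
  calc (n : ℝ) * W ≤ g * (((n : ℝ) - 1) * S) := by linarith
    _ = ((n : ℝ) - 1) * (g * S) := by ring

end Aux

section MainProof

/-- Refined Kato inequality for harmonic maps: `|∇²u|² ≥ n/(n-1) |∇|∇u||²` wherever
`∇u ≠ 0`. -/
theorem stmt16 {n K : ℕ} (hn : 2 ≤ n) (U : Set (Euc n)) (hU : IsOpen U)
    (u : Euc n → Euc K) (hu : ContDiffOn ℝ (⊤ : ℕ∞) u U)
    (hharm : ∀ x ∈ U,
      ∑ i : Fin n, iteratedFDeriv ℝ 2 u x
        ![EuclideanSpace.single i 1, EuclideanSpace.single i 1] = 0) :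
    ∀ x ∈ U, (∑ i : Fin n, ‖fderiv ℝ u x (EuclideanSpace.single i 1)‖ ^ 2) ≠ 0 →
      ∑ i : Fin n, ∑ j : Fin n, ‖iteratedFDeriv ℝ 2 u x
          ![EuclideanSpace.single i 1, EuclideanSpace.single j 1]‖ ^ 2 ≥
        ((n : ℝ) / ((n : ℝ) - 1)) *
          ‖gradient (fun y =>
            Real.sqrt (∑ i : Fin n, ‖fderiv ℝ u y (EuclideanSpace.single i 1)‖ ^ 2)) x‖ ^ 2 := by
  intro x hx hne
  set e : Fin n → Euc n := fun i => EuclideanSpace.single i 1 with he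
  have hnR : (2 : ℝ) ≤ (n : ℝ) := by exact_mod_cast hn
  have hxU : U ∈ nhds x := hU.mem_nhds hx
  have hcx : ContDiffAt ℝ (⊤ : ℕ∞) u x := hu.contDiffAt hxU
  have hd1 : ContDiffAt ℝ 1 (fderiv ℝ u) x := hcx.fderiv_right (WithTop.coe_le_coe.2 le_top)
  have hΦd : DifferentiableAt ℝ (fderiv ℝ u) x := hd1.differentiableAt one_ne_zero
  have hΦ : HasFDerivAt (fderiv ℝ u) (fderiv ℝ (fderiv ℝ u) x) x := hΦd.hasFDerivAt
  set Φ : Euc n →L[ℝ] Euc n →L[ℝ] Euc K := fderiv ℝ (fderiv ℝ u) x with hΦdef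
  have hA : ∀ i j, iteratedFDeriv ℝ 2 u x ![e i, e j] = Φ (e i) (e j) := by
    intro i j
    rw [iteratedFDeriv_two_apply, hΦdef]
    simp
  have hsymΦ : ∀ p q : Euc n, Φ p q = Φ q p := fun p q =>
    (hcx.isSymmSndFDerivAt (by simp; exact WithTop.coe_le_coe.2 le_top)) p q
  have htrΦ : ∑ i, Φ (e i) (e i) = 0 := by
    have h0 := hharm x hx
    calc ∑ i, Φ (e i) (e i)
        = ∑ i, iteratedFDeriv ℝ 2 u x ![e i, e i] :=
          Finset.sum_congr rfl fun i _ => (hA i i).symm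
      _ = 0 := h0
  set v : Fin n → Euc K := fun i => fderiv ℝ u x (e i) with hv
  have hvi : ∀ i, v i = fderiv ℝ u x (e i) := fun i => rfl
  have hvd : ∀ i : Fin n, HasFDerivAt (fun y => fderiv ℝ u y (e i))
      ((ContinuousLinearMap.apply ℝ (Euc K) (e i)).comp Φ) x := fun i =>
    (ContinuousLinearMap.apply ℝ (Euc K) (e i)).hasFDerivAt.comp x hΦ
  set D : Fin n → (Euc n →L[ℝ] ℝ) := fun i =>
    (fderivInnerCLM ℝ (v i, v i)).comp
      (((ContinuousLinearMap.apply ℝ (Euc K) (e i)).comp Φ).prod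
       ((ContinuousLinearMap.apply ℝ (Euc K) (e i)).comp Φ)) with hD
  have hsq : ∀ i : Fin n, HasFDerivAt (fun y => ‖fderiv ℝ u y (e i)‖ ^ 2) (D i) x := by
    intro i
    have h1 := HasFDerivAt.inner (𝕜 := ℝ) (hvd i) (hvd i)
    have h2 : (fun y => (inner ℝ (fderiv ℝ u y (e i)) (fderiv ℝ u y (e i)) : ℝ))
        = fun y => ‖fderiv ℝ u y (e i)‖ ^ 2 :=
      funext fun y => real_inner_self_eq_norm_sq _
    rw [h2] at h1
    exact h1
  have hgder : HasFDerivAt (fun y => ∑ i : Fin n, ‖fderiv ℝ u y (e i)‖ ^ 2)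
      (∑ i, D i) x := HasFDerivAt.fun_sum fun i _ => hsq i
  set gx : ℝ := ∑ i : Fin n, ‖fderiv ℝ u x (e i)‖ ^ 2 with hgx
  have hgx0 : 0 < gx := lt_of_le_of_ne
    (Finset.sum_nonneg fun i _ => sq_nonneg _) (Ne.symm hne)
  have hsgx : 0 < Real.sqrt gx := Real.sqrt_pos.2 hgx0
  set L : Euc n →L[ℝ] ℝ := (1 / (2 * Real.sqrt gx)) • ∑ i, D i with hL
  have hfder : HasFDerivAt (fun y => Real.sqrt (∑ i : Fin n, ‖fderiv ℝ u y (e i)‖ ^ 2))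
      L x := hgder.sqrt hne
  have hgradeq : gradient (fun y =>
      Real.sqrt (∑ i : Fin n, ‖fderiv ℝ u y (e i)‖ ^ 2)) x
      = (InnerProductSpace.toDual ℝ (Euc n)).symm L := by
    rw [← hfder.fderiv]; rfl
  have hDij : ∀ i j, D i (e j) = 2 * (inner ℝ (v i) (Φ (e j) (e i)) : ℝ) := by
    intro i j
    rw [hD]
    simp only [ContinuousLinearMap.comp_apply, ContinuousLinearMap.prod_apply,
      fderivInnerCLM_apply, ContinuousLinearMap.apply_apply]
    rw [real_inner_comm (Φ (e j) (e i)) (v i)]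
    ring
  set w : Fin n → ℝ := fun j => ∑ i, (inner ℝ (v i) (Φ (e i) (e j)) : ℝ) with hwdef
  have hwj : ∀ j, w j = ∑ i, (inner ℝ (v i) (Φ (e i) (e j)) : ℝ) := fun j => rfl
  have hLj : ∀ j, L (e j) = w j / Real.sqrt gx := by
    intro j
    rw [hL]
    rw [ContinuousLinearMap.smul_apply, ContinuousLinearMap.sum_apply]
    rw [Finset.sum_congr rfl fun i (_ : i ∈ Finset.univ) => hDij i j]
    have hsw : ∑ i, 2 * (inner ℝ (v i) (Φ (e j) (e i)) : ℝ) = 2 * w j := by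
      rw [← Finset.mul_sum, hwj]
      congr 1
      exact Finset.sum_congr rfl fun i _ => by rw [hsymΦ (e j) (e i)]
    rw [hsw]
    rw [smul_eq_mul]
    field_simp
  have hgradsq : ‖gradient (fun y =>
      Real.sqrt (∑ i : Fin n, ‖fderiv ℝ u y (e i)‖ ^ 2)) x‖ ^ 2
      = (∑ j, w j ^ 2) / gx := by
    rw [hgradeq, euc_norm_sq]
    have hcoord : ∀ j : Fin n, ((InnerProductSpace.toDual ℝ (Euc n)).symm L) j = L (e j) := by
      intro j
      have h1 : ((InnerProductSpace.toDual ℝ (Euc n)).symm L) j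
          = (inner ℝ ((InnerProductSpace.toDual ℝ (Euc n)).symm L) (e j) : ℝ) := by
        rw [he]
        rw [EuclideanSpace.inner_single_right]
        simp
      rw [h1, InnerProductSpace.toDual_symm_apply]
    rw [Finset.sum_congr rfl fun j (_ : j ∈ Finset.univ) => by rw [hcoord j, hLj j]]
    rw [Finset.sum_congr rfl fun j (_ : j ∈ Finset.univ) =>
      div_pow (w j) (Real.sqrt gx) 2]
    rw [← Finset.sum_div, Real.sq_sqrt hgx0.le]
  -- apply the algebraic inequality
  have key : (n : ℝ) * ∑ j, w j ^ 2 ≤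
      ((n : ℝ) - 1) * (gx * ∑ i, ∑ j, ‖Φ (e i) (e j)‖ ^ 2) := by
    have h := kato_vec hn v (fun i j => Φ (e i) (e j))
      (fun i j => hsymΦ (e i) (e j)) htrΦ
    have hgveq : ∑ i, ‖v i‖ ^ 2 = gx := by
      rw [hgx]
    rw [hgveq] at h
    exact h
  have hSnn : 0 ≤ ∑ i, ∑ j, ‖Φ (e i) (e j)‖ ^ 2 :=
    Finset.sum_nonneg fun i _ => Finset.sum_nonneg fun j _ => sq_nonneg _
  have hgoalA : ∑ i : Fin n, ∑ j : Fin n, ‖iteratedFDeriv ℝ 2 u x ![e i, e j]‖ ^ 2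
      = ∑ i, ∑ j, ‖Φ (e i) (e j)‖ ^ 2 :=
    Finset.sum_congr rfl fun i _ => Finset.sum_congr rfl fun j _ => by rw [hA]
  rw [ge_iff_le, hgradsq, hgoalA]
  have hn1 : (0 : ℝ) < (n : ℝ) - 1 := by linarith
  have hmulpos : (0 : ℝ) < ((n : ℝ) - 1) * gx := mul_pos hn1 hgx0
  have heq : (n : ℝ) / ((n : ℝ) - 1) * ((∑ j, w j ^ 2) / gx)
      = ((n : ℝ) * ∑ j, w j ^ 2) / (((n : ℝ) - 1) * gx) := by
    field_simp
  rw [heq, div_le_iff₀ hmulpos]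
  calc (n : ℝ) * ∑ j, w j ^ 2
      ≤ ((n : ℝ) - 1) * (gx * ∑ i, ∑ j, ‖Φ (e i) (e j)‖ ^ 2) := key
    _ = (∑ i, ∑ j, ‖Φ (e i) (e j)‖ ^ 2) * (((n : ℝ) - 1) * gx) := by ring

end MainProof
end
end
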